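/- arXiv:1905.01869 — 3 statements merged into one kernel-verified Lean document; each statement's English description precedes it below -/
import Mathlib

section
/- Let G be a topological group equipped with a metric that is invariant under right translations, i.e. dist(a·g, b·g) = dist(a, b) for all a, b, g ∈ G. Let p, q : [0,1] → G be continuous paths with p(0) = q(0) = 1. Define the concatenated path c : [0,1] → G by c(t) = p(2t) for t ∈ [0, 1/2] and c(t) = q(2t−1)·p(1) for t ∈ [1/2, 1]. Then A(c) ≤ A(p) + A(q). -/
open Set
open scoped ENNReal

/-- Two maps `[0,1] → G` are homotopic relatively to the endpoints `{0, 1}`. -/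
def HomotopicRelEndpoints {G : Type*} [TopologicalSpace G] (p q : ℝ → G) : Prop :=
  ∃ H : ℝ × ℝ → G, ContinuousOn H (Set.Icc 0 1 ×ˢ Set.Icc 0 1) ∧
    (∀ t ∈ Set.Icc (0:ℝ) 1, H (0, t) = p t) ∧
    (∀ t ∈ Set.Icc (0:ℝ) 1, H (1, t) = q t) ∧
    (∀ s ∈ Set.Icc (0:ℝ) 1, H (s, 0) = p 0) ∧
    (∀ s ∈ Set.Icc (0:ℝ) 1, H (s, 1) = p 1)

/-- The amplitude of a path `p : [0,1] → G` in a metric group `G`: the infimum of the total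
variations (lengths) of continuous paths with the same endpoints that are homotopic to `p`
relatively to `{0, 1}`. -/
noncomputable def amplitude {G : Type*} [MetricSpace G] (p : ℝ → G) : ℝ≥0∞ :=
  ⨅ (q : ℝ → G) (_ : ContinuousOn q (Set.Icc 0 1)) (_ : q 0 = p 0) (_ : q 1 = p 1)
    (_ : HomotopicRelEndpoints p q), eVariationOn q (Set.Icc 0 1)

/-! Concatenating competitors `p'` for `p` and `q'` for `q` (the latter translated by `p 1`) gives
a competitor for `c`: concatenation carries homotopies rel endpoints to homotopies rel endpoints,
and lengths add under concatenation. Right translation is an isometry, so it preserves lengths and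
homotopies, whence `A(q · p 1) ≤ A(q)`. Taking infima over `p'` and `q'` gives the bound. -/

lemma Isometry.eVariationOn_comp {α E F : Type*} [LinearOrder α] [PseudoEMetricSpace E]
    [PseudoEMetricSpace F] {φ : E → F} (hφ : Isometry φ) (f : α → E) (s : Set α) :
    eVariationOn (φ ∘ f) s = eVariationOn f s := by
  simp only [eVariationOn, Function.comp_apply, hφ.edist_eq]

lemma eVariationOn_comp_affine {E : Type*} [PseudoEMetricSpace E] (f : ℝ → E) {a : ℝ}
    (ha : 0 < a) (b x y : ℝ) :
    eVariationOn (fun t => f (a * t + b)) (Icc x y) =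
      eVariationOn f (Icc (a * x + b) (a * y + b)) := by
  rw [← image_affine_Icc' ha]
  exact eVariationOn.comp_eq_of_monotoneOn f _ fun s _ t _ hst => by gcongr

lemma isometry_mul_right_of_dist_mul_right {G : Type*} [Mul G] [PseudoMetricSpace G]
    (hright : ∀ a b g : G, dist (a * g) (b * g) = dist a b) (g : G) :
    Isometry fun x => x * g :=
  Isometry.of_dist_eq fun a b => hright a b g

section pathConcat

variable {X : Type*}

noncomputable def pathConcat (f g : ℝ → X) (t : ℝ) : X :=
  if t ≤ 1 / 2 then f (2 * t) else g (2 * t - 1)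

variable {f g : ℝ → X}

@[simp]
lemma pathConcat_zero : pathConcat f g 0 = f 0 := by
  simp [pathConcat]

@[simp]
lemma pathConcat_one : pathConcat f g 1 = g 1 := by
  norm_num [pathConcat]

lemma eqOn_pathConcat_left : EqOn (pathConcat f g) (fun t => f (2 * t)) (Iic (1 / 2)) :=
  fun _ ht => if_pos ht

lemma eqOn_pathConcat_right (h : f 1 = g 0) :
    EqOn (pathConcat f g) (fun t => g (2 * t - 1)) (Ici (1 / 2)) := by
  intro t ht
  rcases (mem_Ici.1 ht).eq_or_lt with rfl | hlt
  · norm_num [pathConcat, h]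
  · exact if_neg hlt.not_ge

lemma Icc_zero_one_eq_union_halves : Icc (0 : ℝ) 1 = Icc 0 (1 / 2) ∪ Icc (1 / 2) 1 :=
  (Icc_union_Icc_eq_Icc (by norm_num) (by norm_num)).symm

lemma mapsTo_two_mul_Icc : MapsTo (fun t : ℝ => 2 * t) (Icc 0 (1 / 2)) (Icc 0 1) :=
  fun t ⟨h0, h1⟩ => ⟨by linarith, by linarith⟩

lemma mapsTo_two_mul_sub_one_Icc : MapsTo (fun t : ℝ => 2 * t - 1) (Icc (1 / 2) 1) (Icc 0 1) :=
  fun t ⟨h0, h1⟩ => ⟨by linarith, by linarith⟩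

lemma pathConcat_congr {f' g' : ℝ → X} (hf : EqOn f f' (Icc 0 1)) (hg : EqOn g g' (Icc 0 1)) :
    EqOn (pathConcat f g) (pathConcat f' g') (Icc 0 1) := by
  intro t ht
  rcases le_or_gt t (1 / 2) with h | h
  · simp only [pathConcat, if_pos h, hf (mapsTo_two_mul_Icc ⟨ht.1, h⟩)]
  · simp only [pathConcat, if_neg h.not_ge, hg (mapsTo_two_mul_sub_one_Icc ⟨h.le, ht.2⟩)]

lemma eVariationOn_pathConcat [PseudoEMetricSpace X] (h : f 1 = g 0) :
    eVariationOn (pathConcat f g) (Icc 0 1) =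
      eVariationOn f (Icc 0 1) + eVariationOn g (Icc 0 1) := by
  have hsplit := eVariationOn.Icc_add_Icc (pathConcat f g) (s := univ)
    (by norm_num : (0 : ℝ) ≤ 1 / 2) (by norm_num : (1 / 2 : ℝ) ≤ 1) (mem_univ _)
  simp only [univ_inter] at hsplit
  rw [← hsplit, eVariationOn.eq_of_eqOn (eqOn_pathConcat_left.mono Icc_subset_Iic_self),
    eVariationOn.eq_of_eqOn ((eqOn_pathConcat_right h).mono Icc_subset_Ici_self)]
  have h₁ : eVariationOn (fun t => f (2 * t)) (Icc 0 (1 / 2)) = eVariationOn f (Icc 0 1) := by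
    convert eVariationOn_comp_affine f two_pos 0 0 (1 / 2) using 2 <;> norm_num
  have h₂ : eVariationOn (fun t => g (2 * t - 1)) (Icc (1 / 2) 1) = eVariationOn g (Icc 0 1) := by
    convert eVariationOn_comp_affine g two_pos (-1) (1 / 2) 1 using 2 <;>
      norm_num [sub_eq_add_neg]
  rw [h₁, h₂]

variable [TopologicalSpace X]

lemma ContinuousOn.pathConcat (hf : ContinuousOn f (Icc 0 1)) (hg : ContinuousOn g (Icc 0 1))
    (h : f 1 = g 0) : ContinuousOn (pathConcat f g) (Icc 0 1) := by
  rw [Icc_zero_one_eq_union_halves]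
  refine ContinuousOn.union_of_isClosed ?_ ?_ isClosed_Icc isClosed_Icc
  · refine (hf.comp (by fun_prop) mapsTo_two_mul_Icc).congr ?_
    exact eqOn_pathConcat_left.mono fun t ht => ht.2
  · refine (hg.comp (by fun_prop) mapsTo_two_mul_sub_one_Icc).congr ?_
    exact (eqOn_pathConcat_right h).mono fun t ht => ht.1

lemma continuousOn_pathConcat_of_uncurry {F G : ℝ × ℝ → X}
    (hF : ContinuousOn F (Icc 0 1 ×ˢ Icc 0 1)) (hG : ContinuousOn G (Icc 0 1 ×ˢ Icc 0 1))
    (h : ∀ s ∈ Icc (0 : ℝ) 1, F (s, 1) = G (s, 0)) :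
    ContinuousOn (fun x => pathConcat (fun t => F (x.1, t)) (fun t => G (x.1, t)) x.2)
      (Icc 0 1 ×ˢ Icc 0 1) := by
  rw [show Icc (0 : ℝ) 1 ×ˢ Icc (0 : ℝ) 1 =
      Icc 0 1 ×ˢ Icc 0 (1 / 2) ∪ Icc 0 1 ×ˢ Icc (1 / 2) 1 by rw [← prod_union, ← Icc_zero_one_eq_union_halves]]
  refine ContinuousOn.union_of_isClosed ?_ ?_ (isClosed_Icc.prod isClosed_Icc)
    (isClosed_Icc.prod isClosed_Icc)
  · refine (hF.comp (f := fun x : ℝ × ℝ => (x.1, 2 * x.2)) (by fun_prop)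
      fun x hx => ⟨hx.1, mapsTo_two_mul_Icc hx.2⟩).congr ?_
    exact fun x hx => eqOn_pathConcat_left hx.2.2
  · refine (hG.comp (f := fun x : ℝ × ℝ => (x.1, 2 * x.2 - 1)) (by fun_prop)
      fun x hx => ⟨hx.1, mapsTo_two_mul_sub_one_Icc hx.2⟩).congr ?_
    exact fun x hx => eqOn_pathConcat_right (h x.1 hx.1) hx.2.1

end pathConcat

section Homotopy

variable {X Y : Type*} [TopologicalSpace X] [TopologicalSpace Y] {f f' g g' : ℝ → X}

lemma HomotopicRelEndpoints.congr_left (hf : HomotopicRelEndpoints f f')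
    (hfg : EqOn f g (Icc 0 1)) : HomotopicRelEndpoints g f' := by
  obtain ⟨H, hH, hH0, hH1, hHl, hHr⟩ := hf
  refine ⟨H, hH, fun t ht => (hH0 t ht).trans (hfg ht), hH1, fun s hs => ?_, fun s hs => ?_⟩
  · rw [hHl s hs, hfg (left_mem_Icc.2 zero_le_one)]
  · rw [hHr s hs, hfg (right_mem_Icc.2 zero_le_one)]

lemma HomotopicRelEndpoints.map {φ : X → Y} (hφ : Continuous φ)
    (hf : HomotopicRelEndpoints f f') : HomotopicRelEndpoints (φ ∘ f) (φ ∘ f') := by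
  obtain ⟨H, hH, hH0, hH1, hHl, hHr⟩ := hf
  exact ⟨φ ∘ H, hφ.comp_continuousOn hH, fun t ht => congrArg φ (hH0 t ht),
    fun t ht => congrArg φ (hH1 t ht), fun s hs => congrArg φ (hHl s hs),
    fun s hs => congrArg φ (hHr s hs)⟩

lemma HomotopicRelEndpoints.pathConcat (hf : HomotopicRelEndpoints f f')
    (hg : HomotopicRelEndpoints g g') (h : f 1 = g 0) :
    HomotopicRelEndpoints (pathConcat f g) (pathConcat f' g') := by
  obtain ⟨F, hF, hF0, hF1, hFl, hFr⟩ := hf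
  obtain ⟨G, hG, hG0, hG1, hGl, hGr⟩ := hg
  refine ⟨fun x => _root_.pathConcat (fun t => F (x.1, t)) (fun t => G (x.1, t)) x.2,
    continuousOn_pathConcat_of_uncurry hF hG fun s hs => by rw [hFr s hs, hGl s hs, h],
    pathConcat_congr hF0 hG0, pathConcat_congr hF1 hG1, fun s hs => ?_, fun s hs => ?_⟩
  · simp only [pathConcat_zero, hFl s hs]
  · simp only [pathConcat_one, hGr s hs]

end Homotopy

section Amplitude

variable {X Y : Type*} [MetricSpace X] [MetricSpace Y] {f g : ℝ → X}

lemma amplitude_le_eVariationOn (hg : ContinuousOn g (Icc 0 1)) (h0 : g 0 = f 0)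
    (h1 : g 1 = f 1) (hfg : HomotopicRelEndpoints f g) :
    amplitude f ≤ eVariationOn g (Icc 0 1) :=
  (iInf_le _ g).trans <| (iInf_le _ hg).trans <| (iInf_le _ h0).trans <|
    (iInf_le _ h1).trans <| iInf_le _ hfg

lemma le_amplitude {a : ℝ≥0∞}
    (h : ∀ f', ContinuousOn f' (Icc 0 1) → f' 0 = f 0 → f' 1 = f 1 →
      HomotopicRelEndpoints f f' → a ≤ eVariationOn f' (Icc 0 1)) :
    a ≤ amplitude f := by
  simpa only [amplitude, le_iInf_iff] using h

lemma le_amplitude_add_amplitude {a : ℝ≥0∞}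
    (h : ∀ f', ContinuousOn f' (Icc 0 1) → f' 0 = f 0 → f' 1 = f 1 →
      HomotopicRelEndpoints f f' →
      ∀ g', ContinuousOn g' (Icc 0 1) → g' 0 = g 0 → g' 1 = g 1 →
      HomotopicRelEndpoints g g' → a ≤ eVariationOn f' (Icc 0 1) + eVariationOn g' (Icc 0 1)) :
    a ≤ amplitude f + amplitude g := by
  simp only [amplitude, ENNReal.iInf_add, ENNReal.add_iInf, le_iInf_iff]
  exact fun g' hg' hg'0 hg'1 hgg' f' hf' hf'0 hf'1 hff' =>
    h f' hf' hf'0 hf'1 hff' g' hg' hg'0 hg'1 hgg'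

lemma amplitude_le_of_eqOn (hfg : EqOn f g (Icc 0 1)) : amplitude g ≤ amplitude f :=
  le_amplitude fun _ hf' h0 h1 hff' =>
    amplitude_le_eVariationOn hf' (h0.trans (hfg (left_mem_Icc.2 zero_le_one)))
      (h1.trans (hfg (right_mem_Icc.2 zero_le_one))) (hff'.congr_left hfg)

lemma amplitude_congr (hfg : EqOn f g (Icc 0 1)) : amplitude f = amplitude g :=
  le_antisymm (amplitude_le_of_eqOn hfg.symm) (amplitude_le_of_eqOn hfg)

lemma Isometry.amplitude_comp_le {φ : X → Y} (hφ : Isometry φ) (f : ℝ → X) :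
    amplitude (φ ∘ f) ≤ amplitude f :=
  le_amplitude fun f' hf' h0 h1 hff' => by
    rw [← hφ.eVariationOn_comp]
    exact amplitude_le_eVariationOn (hφ.continuous.comp_continuousOn hf')
      (congrArg φ h0) (congrArg φ h1) (hff'.map hφ.continuous)

lemma amplitude_pathConcat_le (h : f 1 = g 0) :
    amplitude (pathConcat f g) ≤ amplitude f + amplitude g :=
  le_amplitude_add_amplitude fun f' hf' hf'0 hf'1 hff' g' hg' hg'0 hg'1 hgg' => by
    have h' : f' 1 = g' 0 := by rw [hf'1, hg'0, h]
    rw [← eVariationOn_pathConcat h']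
    exact amplitude_le_eVariationOn (hf'.pathConcat hg' h') (by simp [hf'0]) (by simp [hg'1])
      (hff'.pathConcat hgg' h)

end Amplitude

theorem amplitude_concat_le_general
    {G : Type*} [Group G] [MetricSpace G]
    (hright : ∀ a b g : G, dist (a * g) (b * g) = dist a b)
    (p q : ℝ → G)
    (hq0 : q 0 = 1)
    (c : ℝ → G)
    (hc₁ : ∀ t ∈ Set.Icc (0:ℝ) (1/2), c t = p (2 * t))
    (hc₂ : ∀ t ∈ Set.Icc (1/2 : ℝ) 1, c t = q (2 * t - 1) * p 1) :
    amplitude c ≤ amplitude p + amplitude q := by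
  have hjoin : p 1 = q 0 * p 1 := by rw [hq0, one_mul]
  have hc : EqOn (pathConcat p ((· * p 1) ∘ q)) c (Icc 0 1) := fun t ht => by
    rcases le_or_gt t (1 / 2) with h | h
    · rw [eqOn_pathConcat_left h, hc₁ t ⟨ht.1, h⟩]
    · rw [eqOn_pathConcat_right hjoin h.le, hc₂ t ⟨h.le, ht.2⟩]
      rfl
  calc amplitude c = amplitude (pathConcat p ((· * p 1) ∘ q)) := (amplitude_congr hc).symm
    _ ≤ amplitude p + amplitude ((· * p 1) ∘ q) := amplitude_pathConcat_le hjoin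
    _ ≤ amplitude p + amplitude q := by
      gcongr
      exact (isometry_mul_right_of_dist_mul_right hright (p 1)).amplitude_comp_le q

/-- In a topological group `G` with a right-invariant metric, the amplitude of
the concatenation `c` of a path `p` with a right-translate of a path `q` (both starting at the
identity) is at most `A(p) + A(q)`. -/
theorem amplitude_concat_le
    {G : Type*} [Group G] [MetricSpace G] [IsTopologicalGroup G]
    (hright : ∀ a b g : G, dist (a * g) (b * g) = dist a b)
    (p q : ℝ → G)
    (hp : ContinuousOn p (Set.Icc 0 1)) (hq : ContinuousOn q (Set.Icc 0 1))
    (hp0 : p 0 = 1) (hq0 : q 0 = 1)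
    (c : ℝ → G)
    (hc₁ : ∀ t ∈ Set.Icc (0:ℝ) (1/2), c t = p (2 * t))
    (hc₂ : ∀ t ∈ Set.Icc (1/2 : ℝ) 1, c t = q (2 * t - 1) * p 1) :
    amplitude c ≤ amplitude p + amplitude q :=
  amplitude_concat_le_general hright p q hq0 c hc₁ hc₂
end

section
/- Let m ≥ 1, let a : ℝ^m → (ℝ^m →ₗ[ℝ] ℝ) be a continuous real 1-form, and let γ ∈ C¹([0,1], ℝ^m). The parallel transport of the associated U(1)-connection along γ is the path p : [0,1] → circle (the unit circle in ℂ) given by p(t) = exp(−i ∫₀ᵗ a(γ(s))[γ'(s)] ds). Then the amplitude of p in the circle group, with the metric induced by the Euclidean distance of ℂ (which is bi-invariant), satisfies A(p) = | ∫₀¹ a(γ(t))[γ'(t)] dt |. -/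
open Set
open scoped ENNReal

open MeasureTheory

/-!
Write `L t = -∫₀ᵗ a(γ s)[γ' s] ds`, so that `p = exp ∘ L`. The straight path
`t ↦ exp (L 0 + t (L 1 - L 0))` is homotopic to `p` relative to the endpoints (interpolate the
lifts linearly) and, `exp` being 1-Lipschitz, has length at most `|L 1 - L 0|`. Conversely, by
homotopy lifting for the covering `exp : ℝ → circle`, every competitor `q` has a continuous lift
`θ` with `θ 0 = L 0` and `θ 1 = L 1`; since the chord `‖exp x - exp y‖` equals `|x - y|` up to a
factor tending to `1` as `x - y → 0`, sums over fine partitions bound the length of `q` below by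
`|θ 1 - θ 0|`.
-/

open Complex in
theorem Circle.dist_exp_exp (x y : ℝ) :
    dist (Circle.exp x) (Circle.exp y) = ‖Complex.exp (I * (x - y : ℝ)) - 1‖ := by
  have : Complex.exp (x * I) - Complex.exp (y * I)
      = Complex.exp (y * I) * (Complex.exp (I * (x - y : ℝ)) - 1) := by
    rw [mul_sub, mul_one, ← Complex.exp_add]; push_cast; ring_nf
  change dist (Circle.exp x : ℂ) (Circle.exp y) = _
  rw [Complex.dist_eq, Circle.coe_exp, Circle.coe_exp, this, norm_mul,
    Complex.norm_exp_ofReal_mul_I, one_mul]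

theorem Circle.lipschitzWith_exp : LipschitzWith 1 Circle.exp :=
  LipschitzWith.of_dist_le_mul fun x y => by
    rw [Circle.dist_exp_exp, NNReal.coe_one, one_mul, Real.dist_eq]
    exact Real.norm_exp_I_mul_ofReal_sub_one_le

open Complex in
theorem Circle.abs_sub_sub_sq_le_dist_exp {x y : ℝ} (h : |x - y| ≤ 1) :
    |x - y| - |x - y| ^ 2 ≤ dist (Circle.exp x) (Circle.exp y) := by
  set w : ℂ := I * (x - y : ℝ)
  have hw : ‖w‖ = |x - y| := by rw [norm_mul, norm_I, one_mul, norm_real, Real.norm_eq_abs]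
  have hexp := Complex.norm_exp_sub_one_sub_id_le (x := w) (hw ▸ h)
  have htri : ‖w‖ - ‖Complex.exp w - 1‖ ≤ ‖Complex.exp w - 1 - w‖ :=
    (norm_sub_norm_le _ _).trans (norm_sub_rev _ _).le
  rw [Circle.dist_exp_exp, ← hw]
  linarith

theorem Circle.exists_mul_abs_sub_le_dist_exp {ε : ℝ} (hε : 0 < ε) :
    ∃ δ > 0, ∀ x y : ℝ, |x - y| < δ → (1 - ε) * |x - y| ≤ dist (Circle.exp x) (Circle.exp y) := by
  refine ⟨min ε 1, lt_min hε one_pos, fun x y hxy => ?_⟩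
  have hsq : |x - y| ^ 2 ≤ ε * |x - y| := by
    rw [sq]; exact mul_le_mul_of_nonneg_right (hxy.le.trans (min_le_left _ _)) (abs_nonneg _)
  linarith [Circle.abs_sub_sub_sq_le_dist_exp (hxy.le.trans (min_le_right _ _))]

section Variation

variable {E : Type*} [PseudoMetricSpace E] {g : ℝ → E} {θ : ℝ → ℝ} {a b : ℝ}

theorem mul_abs_sub_le_eVariationOn_comp {ε δ : ℝ} (hε : ε ≤ 1) (hδ : 0 < δ)
    (hg : ∀ x y : ℝ, |x - y| < δ → (1 - ε) * |x - y| ≤ dist (g x) (g y))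
    (hab : a ≤ b) (hθ : ContinuousOn θ (Icc a b)) :
    ENNReal.ofReal ((1 - ε) * |θ b - θ a|) ≤ eVariationOn (g ∘ θ) (Icc a b) := by
  obtain ⟨η, hη, hθη⟩ := Metric.uniformContinuousOn_iff.mp
    (isCompact_Icc.uniformContinuousOn_of_continuous hθ) δ hδ
  obtain ⟨n, hn⟩ := exists_nat_gt ((b - a) / η)
  have hba : 0 ≤ b - a := sub_nonneg.2 hab
  have hn0 : (0 : ℝ) < n := lt_of_le_of_lt (div_nonneg hba hη.le) hn
  set u : ℕ → ℝ := fun i => a + (b - a) * i / n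
  have hu_mono : Monotone u := fun i j hij => by
    simp only [u]; gcongr
  have hu_mem : ∀ i ≤ n, u i ∈ Icc a b := fun i hi => by
    have hin : (b - a) * i / n ≤ b - a := by
      rw [div_le_iff₀ hn0]; gcongr
    have : 0 ≤ (b - a) * i / n := by positivity
    constructor <;> simp only [u] <;> linarith
  have hu_step : ∀ i < n, dist (θ (u (i + 1))) (θ (u i)) < δ := fun i hi => by
    have hstep : u (i + 1) - u i = (b - a) / n := by simp only [u]; push_cast; ring
    refine hθη _ (hu_mem _ hi) _ (hu_mem _ hi.le) ?_
    rw [Real.dist_eq, hstep, abs_of_nonneg (by positivity), div_lt_iff₀ hn0, mul_comm]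
    exact (div_lt_iff₀ hη).1 hn
  have hu0 : u 0 = a := by simp [u]
  have hun : u n = b := by simp [u, hn0.ne']
  calc ENNReal.ofReal ((1 - ε) * |θ b - θ a|)
      ≤ ENNReal.ofReal (∑ i ∈ Finset.range n, dist (g (θ (u (i + 1)))) (g (θ (u i)))) := by
        refine ENNReal.ofReal_le_ofReal ?_
        calc (1 - ε) * |θ b - θ a|
            = (1 - ε) * |∑ i ∈ Finset.range n, (θ (u (i + 1)) - θ (u i))| := by
              rw [Finset.sum_range_sub (fun i => θ (u i)), hu0, hun]
          _ ≤ ∑ i ∈ Finset.range n, (1 - ε) * |θ (u (i + 1)) - θ (u i)| := by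
              rw [← Finset.mul_sum]; gcongr
              exact Finset.abs_sum_le_sum_abs _ _
          _ ≤ _ := Finset.sum_le_sum fun i hi => hg _ _ (hu_step i (Finset.mem_range.1 hi))
    _ = ∑ i ∈ Finset.range n, edist ((g ∘ θ) (u (i + 1))) ((g ∘ θ) (u i)) := by
        rw [ENNReal.ofReal_sum_of_nonneg fun i _ => dist_nonneg]
        simp only [Function.comp_apply, edist_dist]
    _ ≤ eVariationOn (g ∘ θ) (Icc a b) :=
        eVariationOn.sum_le_of_monotoneOn_Iic (hu_mono.monotoneOn _) hu_mem

open Filter Topology in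
theorem abs_sub_le_eVariationOn_comp
    (hg : ∀ ε > 0, ∃ δ > 0, ∀ x y : ℝ, |x - y| < δ → (1 - ε) * |x - y| ≤ dist (g x) (g y))
    (hab : a ≤ b) (hθ : ContinuousOn θ (Icc a b)) :
    ENNReal.ofReal |θ b - θ a| ≤ eVariationOn (g ∘ θ) (Icc a b) := by
  have hlim : Tendsto (fun ε : ℝ => ENNReal.ofReal ((1 - ε) * |θ b - θ a|)) (𝓝[>] 0)
      (𝓝 (ENNReal.ofReal |θ b - θ a|)) :=
    ((ENNReal.continuous_ofReal.comp (by fun_prop)).tendsto' 0 _ (by simp)).mono_left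
      nhdsWithin_le_nhds
  refine le_of_tendsto hlim (eventually_of_mem (Ioo_mem_nhdsGT one_pos) fun ε hε => ?_)
  obtain ⟨δ, hδ, hgδ⟩ := hg ε hε.1
  exact mul_abs_sub_le_eVariationOn_comp hε.2.le hδ hgδ hab hθ

end Variation

theorem LipschitzOnWith.eVariationOn_Icc_le {E : Type*} [PseudoEMetricSpace E] {f : ℝ → E}
    {K : NNReal} {a b : ℝ} (hf : LipschitzOnWith K f (Icc a b)) :
    eVariationOn f (Icc a b) ≤ K * ENNReal.ofReal (b - a) := by
  simpa using hf.comp_eVariationOn_le (g := id) (mapsTo_id _)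

section Homotopy

variable {X : Type*} [TopologicalSpace X]

def ContinuousOn.restrictUnitInterval {q : ℝ → X} (hq : ContinuousOn q (Icc 0 1)) :
    C(unitInterval, X) :=
  ⟨(Icc 0 1).domRestrict q, hq.domRestrict⟩

theorem HomotopicRelEndpoints.homotopicRel {p q : ℝ → X} (h : HomotopicRelEndpoints p q)
    (hp : ContinuousOn p (Icc 0 1)) (hq : ContinuousOn q (Icc 0 1)) :
    hp.restrictUnitInterval.HomotopicRel hq.restrictUnitInterval {0, 1} := by
  obtain ⟨H, hH, hH0, hH1, hHs0, hHs1⟩ := h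
  refine ⟨{ toFun := fun x => H (x.1, x.2)
            continuous_toFun := hH.comp_continuous (by fun_prop) fun x => ⟨x.1.2, x.2.2⟩
            map_zero_left := fun t => hH0 t t.2
            map_one_left := fun t => hH1 t t.2
            prop' := ?_ }⟩
  rintro s t (rfl | rfl)
  exacts [hHs0 s s.2, hHs1 s s.2]

end Homotopy

theorem IsCoveringMap.exists_lift_of_homotopicRelEndpoints {E X : Type*} [TopologicalSpace E]
    [TopologicalSpace X] {π : E → X} (cov : IsCoveringMap π) {L : ℝ → E}
    (hL : ContinuousOn L (Icc 0 1)) {q : ℝ → X} (hq : ContinuousOn q (Icc 0 1))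
    (h : HomotopicRelEndpoints (fun t => π (L t)) q) :
    ∃ θ : ℝ → E, ContinuousOn θ (Icc 0 1) ∧ EqOn (fun t => π (θ t)) q (Icc 0 1) ∧
      θ 0 = L 0 ∧ θ 1 = L 1 := by
  have hpL : ContinuousOn (fun t => π (L t)) (Icc 0 1) := cov.continuous.comp_continuousOn hL
  have hq0 : hq.restrictUnitInterval 0 = π (L 0) := by
    obtain ⟨H, -, -, hH1, hHs0, -⟩ := h
    exact (hH1 0 unitInterval.zero_mem).symm.trans (hHs0 1 unitInterval.one_mem)
  let Θ := cov.liftPath hq.restrictUnitInterval (L 0) hq0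
  have hLlift : (Icc 0 1).domRestrict L = cov.liftPath hpL.restrictUnitInterval (L 0) rfl :=
    (cov.eq_liftPath_iff rfl).2 ⟨hL.domRestrict, rfl, rfl⟩
  refine ⟨IccExtend zero_le_one Θ, Θ.continuous.Icc_extend'.continuousOn, fun t ht => ?_, ?_, ?_⟩
  · simp only [IccExtend_of_mem _ _ ht]
    exact congr_fun (cov.liftPath_lifts _ _ hq0) ⟨t, ht⟩
  · rw [IccExtend_left]; exact cov.liftPath_zero _ _ hq0
  · calc IccExtend zero_le_one Θ 1 = Θ 1 := IccExtend_right _ _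
      _ = cov.liftPath hpL.restrictUnitInterval (L 0) rfl 1 :=
        (cov.liftPath_apply_one_eq_of_homotopicRel (h.homotopicRel hpL hq) (L 0) rfl hq0).symm
      _ = L 1 := by rw [← hLlift]; rfl

theorem homotopicRelEndpoints_comp_of_eq_endpoints {E G : Type*} [NormedAddCommGroup E]
    [NormedSpace ℝ E] [TopologicalSpace G] {f : E → G} (hf : Continuous f) {L₁ L₂ : ℝ → E}
    (hL₁ : ContinuousOn L₁ (Icc 0 1)) (hL₂ : ContinuousOn L₂ (Icc 0 1))
    (h₀ : L₁ 0 = L₂ 0) (h₁ : L₁ 1 = L₂ 1) :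
    HomotopicRelEndpoints (fun t => f (L₁ t)) (fun t => f (L₂ t)) := by
  refine ⟨fun x => f ((1 - x.1) • L₁ x.2 + x.1 • L₂ x.2), ?_, ?_, ?_, ?_, ?_⟩
  · refine hf.comp_continuousOn (ContinuousOn.add ?_ ?_)
    · exact (continuous_const.sub continuous_fst).continuousOn.smul
        (hL₁.comp continuous_snd.continuousOn fun x hx => hx.2)
    · exact continuous_fst.continuousOn.smul (hL₂.comp continuous_snd.continuousOn fun x hx => hx.2)
  all_goals intros; simp [h₀, h₁, ← add_smul]

theorem amplitude_le_eVariationOn_s9 {G : Type*} [MetricSpace G] {p q : ℝ → G}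
    (hq : ContinuousOn q (Icc 0 1)) (h₀ : q 0 = p 0) (h₁ : q 1 = p 1)
    (h : HomotopicRelEndpoints p q) : amplitude p ≤ eVariationOn q (Icc 0 1) :=
  iInf_le_of_le q <| iInf_le_of_le hq <| iInf_le_of_le h₀ <| iInf_le_of_le h₁ <|
    iInf_le_of_le h le_rfl

theorem le_amplitude_s9 {G : Type*} [MetricSpace G] {p : ℝ → G} {c : ℝ≥0∞}
    (h : ∀ q, ContinuousOn q (Icc 0 1) → q 0 = p 0 → q 1 = p 1 → HomotopicRelEndpoints p q →
      c ≤ eVariationOn q (Icc 0 1)) : c ≤ amplitude p :=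
  le_iInf₂ fun q hq => le_iInf₂ fun h₀ h₁ => le_iInf fun hpq => h q hq h₀ h₁ hpq

theorem amplitude_circleExp_comp {L : ℝ → ℝ} (hL : ContinuousOn L (Icc 0 1)) :
    amplitude (fun t => Circle.exp (L t)) = ENNReal.ofReal |L 1 - L 0| := by
  refine le_antisymm ?_ (le_amplitude_s9 fun q hq _ _ hpq => ?_)
  · set M : ℝ → ℝ := fun t => L 0 + t * (L 1 - L 0)
    have hM : LipschitzWith ‖L 1 - L 0‖₊ M := LipschitzWith.of_dist_le_mul fun x y => by
      rw [coe_nnnorm, Real.dist_eq, Real.dist_eq, Real.norm_eq_abs, ← abs_mul]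
      exact (congrArg abs (by ring)).le
    calc amplitude (fun t => Circle.exp (L t))
        ≤ eVariationOn (fun t => Circle.exp (M t)) (Icc 0 1) := by
          refine amplitude_le_eVariationOn_s9 (by fun_prop) (by simp [M]) (by simp [M]) ?_
          exact homotopicRelEndpoints_comp_of_eq_endpoints Circle.lipschitzWith_exp.continuous hL
            (by fun_prop) (by simp [M]) (by simp [M])
      _ ≤ ENNReal.ofReal |L 1 - L 0| := by
          rw [← Real.enorm_eq_ofReal_abs]
          exact ((Circle.lipschitzWith_exp.comp hM).lipschitzOnWith (s := Icc 0 1)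
            ).eVariationOn_Icc_le.trans_eq (by simp [enorm])
  · obtain ⟨θ, hθ, hθq, hθ0, hθ1⟩ :=
      Circle.isCoveringMap_exp.exists_lift_of_homotopicRelEndpoints hL hq hpq
    rw [← hθ0, ← hθ1, ← eVariationOn.eq_of_eqOn hθq]
    exact abs_sub_le_eVariationOn_comp (fun _ => Circle.exists_mul_abs_sub_le_dist_exp)
      zero_le_one hθ

theorem amplitude_circle_group_eq_abs_integral_general
    (m : ℕ)
    (a : EuclideanSpace ℝ (Fin m) → (EuclideanSpace ℝ (Fin m) →L[ℝ] ℝ))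
    (ha : Continuous a)
    (γ γ' : ℝ → EuclideanSpace ℝ (Fin m))
    (hγ : ∀ t ∈ Set.Icc (0:ℝ) 1, HasDerivWithinAt γ (γ' t) (Set.Icc 0 1) t)
    (hγ' : ContinuousOn γ' (Set.Icc 0 1))
    (p : ℝ → Circle)
    (hp : ∀ t : ℝ, p t = Circle.exp (-(∫ s in (0:ℝ)..t, a (γ s) (γ' s)))) :
    amplitude p = ENNReal.ofReal |∫ t in (0:ℝ)..1, a (γ t) (γ' t)| := by
  have hγc : ContinuousOn γ (Icc 0 1) := fun t ht => (hγ t ht).continuousWithinAt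
  have hint : IntegrableOn (fun s => a (γ s) (γ' s)) (uIcc 0 1) := by
    rw [uIcc_of_le zero_le_one]
    exact ((ha.comp_continuousOn hγc).clm_apply hγ').integrableOn_Icc
  have hF : ContinuousOn (fun t => ∫ s in (0:ℝ)..t, a (γ s) (γ' s)) (Icc 0 1) := by
    simpa [uIcc_of_le zero_le_one] using intervalIntegral.continuousOn_primitive_interval hint
  rw [funext hp]
  exact (amplitude_circleExp_comp hF.neg).trans (by simp)

/-- For a continuous real 1-form `a` on `ℝ^m` and a `C¹` curve `γ`, the
parallel transport `p(t) = exp(−i ∫₀ᵗ a(γ(s))[γ'(s)] ds)` of the `U(1)`-connection `i·a` along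
`γ` has amplitude `A(p) = |∫₀¹ a(γ(t))[γ'(t)] dt|` in the circle group. -/
theorem amplitude_circle_group_eq_abs_integral
    (m : ℕ) (hm : 1 ≤ m)
    (a : EuclideanSpace ℝ (Fin m) → (EuclideanSpace ℝ (Fin m) →L[ℝ] ℝ))
    (ha : Continuous a)
    (γ γ' : ℝ → EuclideanSpace ℝ (Fin m))
    (hγ : ∀ t ∈ Set.Icc (0:ℝ) 1, HasDerivWithinAt γ (γ' t) (Set.Icc 0 1) t)
    (hγ' : ContinuousOn γ' (Set.Icc 0 1))
    (p : ℝ → Circle)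
    (hp : ∀ t : ℝ, p t = Circle.exp (-(∫ s in (0:ℝ)..t, a (γ s) (γ' s)))) :
    amplitude p = ENNReal.ofReal |∫ t in (0:ℝ)..1, a (γ t) (γ' t)| :=
  amplitude_circle_group_eq_abs_integral_general m a ha γ γ' hγ hγ' p hp
end

section
/- Let n ≥ 1, m ≥ 1, let ω : ℝ^m → (ℝ^m →ₗ[ℝ] Matrix n n ℂ) be a continuous connection form, let u : ℝ^m → GL(n, ℂ) be C¹, and let ω̃ be the gauge transformation of ω by u, i.e. ω̃(x)[w] = u(x)⁻¹·(Du(x)[w]) + u(x)⁻¹·ω(x)[w]·u(x). Then for every C¹ curve γ : [0,1] → ℝ^m, the parallel transports Pt_γ of ω and P̃t_γ of ω̃ along γ are related by P̃t_γ(t) = u(γ(t))⁻¹ · Pt_γ(t) · u(γ(0)) for every t ∈ [0,1]. In particular the holonomies along a closed curve in the two gauges are conjugate. -/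
open Set
open scoped Matrix

attribute [local instance] Matrix.frobeniusNormedAddCommGroup Matrix.frobeniusNormedSpace
attribute [local instance] Matrix.frobeniusNormedRing Matrix.frobeniusNormedAlgebra

/-!
Both `t ↦ u(γ t) · P̃t(t)` and `t ↦ Pt(t) · u(γ 0)` solve the linear equation
`X' = -ω(γ t)[γ' t] · X` with initial value `u(γ 0)`: for the first this is the product rule,
in which `u · u⁻¹ = 1` cancels the gauge terms of `ω̃`. A linear equation with continuous
coefficient is Lipschitz in `X` on a compact interval, so its solutions are unique.
-/

theorem ODE_linear_solution_unique_of_mem_Icc {R : Type*} [NormedRing R] [NormedSpace ℝ R]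
    {A f g : ℝ → R} {a b : ℝ} (hA : ContinuousOn A (Icc a b))
    (hf : ∀ t ∈ Icc a b, HasDerivWithinAt f (A t * f t) (Icc a b) t)
    (hg : ∀ t ∈ Icc a b, HasDerivWithinAt g (A t * g t) (Icc a b) t)
    (ha : f a = g a) :
    EqOn f g (Icc a b) := by
  obtain ⟨C, hC⟩ := isCompact_Icc.bddAbove_image hA.nnnorm
  have hlip : ∀ t ∈ Ico a b, LipschitzOnWith C (A t * ·) univ := fun t ht =>
    ((lipschitzWith_smul (A t)).weaken
      (hC (mem_image_of_mem _ (Ico_subset_Icc_self ht)))).lipschitzOnWith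
  have hright {h : ℝ → R} (hh : ∀ t ∈ Icc a b, HasDerivWithinAt h (A t * h t) (Icc a b) t)
      (t : ℝ) (ht : t ∈ Ico a b) : HasDerivWithinAt h (A t * h t) (Ici t) t :=
    (hh t (Ico_subset_Icc_self ht)).mono_of_mem_nhdsWithin (Icc_mem_nhdsGE_of_mem ht)
  exact ODE_solution_unique_of_mem_Icc_right hlip
    (fun t ht => (hf t ht).continuousWithinAt) (hright hf) (fun _ _ => trivial)
    (fun t ht => (hg t ht).continuousWithinAt) (hright hg) (fun _ _ => trivial) ha

theorem HasDerivWithinAt.mul_of_gauge_transform {𝔸 : Type*} [NormedRing 𝔸]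
    [NormedAlgebra ℝ 𝔸] {U Q : ℝ → 𝔸} {U' B V : 𝔸} {s : Set ℝ} {t : ℝ}
    (hU : HasDerivWithinAt U U' s t)
    (hQ : HasDerivWithinAt Q (-((V * U' + V * B * U t) * Q t)) s t) (hUV : U t * V = 1) :
    HasDerivWithinAt (fun t => U t * Q t) (-(B * (U t * Q t))) s t := by
  refine (hU.mul hQ).congr_deriv ?_
  have hcancel (X : 𝔸) : U t * (V * X) = X := by rw [← mul_assoc, hUV, one_mul]
  simp only [add_mul, mul_add, mul_neg, mul_assoc, hcancel]
  abel

theorem parallel_transport_gauge_transformation_general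
    (n m : ℕ)
    (ω : EuclideanSpace ℝ (Fin m) → (EuclideanSpace ℝ (Fin m) →L[ℝ] Matrix (Fin n) (Fin n) ℂ))
    (hω : Continuous ω)
    (u : EuclideanSpace ℝ (Fin m) → Matrix (Fin n) (Fin n) ℂ)
    (hu : ContDiff ℝ 1 u)
    (huunit : ∀ x, IsUnit (u x))
    (ωt : EuclideanSpace ℝ (Fin m) → EuclideanSpace ℝ (Fin m) → Matrix (Fin n) (Fin n) ℂ)
    (hωt : ∀ x w, ωt x w = (u x)⁻¹ * fderiv ℝ u x w + (u x)⁻¹ * ω x w * u x)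
    (γ γ' : ℝ → EuclideanSpace ℝ (Fin m))
    (hγ : ∀ t ∈ Set.Icc (0:ℝ) 1, HasDerivWithinAt γ (γ' t) (Set.Icc 0 1) t)
    (hγ' : ContinuousOn γ' (Set.Icc 0 1))
    (Pt : ℝ → Matrix (Fin n) (Fin n) ℂ)
    (hPt0 : Pt 0 = 1)
    (hPt : ∀ t ∈ Set.Icc (0:ℝ) 1,
      HasDerivWithinAt Pt (-(ω (γ t) (γ' t) * Pt t)) (Set.Icc 0 1) t)
    (Ptt : ℝ → Matrix (Fin n) (Fin n) ℂ)
    (hPtt0 : Ptt 0 = 1)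
    (hPtt : ∀ t ∈ Set.Icc (0:ℝ) 1,
      HasDerivWithinAt Ptt (-(ωt (γ t) (γ' t) * Ptt t)) (Set.Icc 0 1) t) :
    ∀ t ∈ Set.Icc (0:ℝ) 1, Ptt t = (u (γ t))⁻¹ * Pt t * u (γ 0) := by
  have hdet (x) : IsUnit (u x).det := (Matrix.isUnit_iff_isUnit_det _).1 (huunit x)
  have hA : ContinuousOn (fun t => -ω (γ t) (γ' t)) (Icc 0 1) :=
    ((hω.comp_continuousOn fun t ht => (hγ t ht).continuousWithinAt).clm_apply hγ').neg
  have hgauged (t) (ht : t ∈ Icc (0:ℝ) 1) : HasDerivWithinAt (fun t => u (γ t) * Ptt t)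
      (-ω (γ t) (γ' t) * (u (γ t) * Ptt t)) (Icc 0 1) t := by
    have huγ :=
      (hu.differentiable one_ne_zero (γ t)).hasFDerivAt.comp_hasDerivWithinAt t (hγ t ht)
    rw [neg_mul]
    exact huγ.mul_of_gauge_transform (hωt _ _ ▸ hPtt t ht) (Matrix.mul_nonsing_inv _ (hdet _))
  have hconj (t) (ht : t ∈ Icc (0:ℝ) 1) : HasDerivWithinAt (fun t => Pt t * u (γ 0))
      (-ω (γ t) (γ' t) * (Pt t * u (γ 0))) (Icc 0 1) t := by
    rw [neg_mul, ← mul_assoc, ← neg_mul]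
    exact (hPt t ht).mul_const _
  intro t ht
  have heq : u (γ t) * Ptt t = Pt t * u (γ 0) :=
    ODE_linear_solution_unique_of_mem_Icc hA hgauged hconj (by simp [hPt0, hPtt0]) ht
  rw [mul_assoc, ← heq, Matrix.nonsing_inv_mul_cancel_left _ _ (hdet _)]

/-- If `ω̃` is the gauge transformation of a continuous connection form `ω` by
a `C¹` map `u : ℝ^m → GL(n, ℂ)`, then the parallel transports of `ω` and `ω̃` along a `C¹` curve
`γ` are related by `P̃t_γ(t) = u(γ(t))⁻¹ · Pt_γ(t) · u(γ(0))`. -/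
theorem parallel_transport_gauge_transformation
    (n m : ℕ) (hn : 1 ≤ n) (hm : 1 ≤ m)
    (ω : EuclideanSpace ℝ (Fin m) → (EuclideanSpace ℝ (Fin m) →L[ℝ] Matrix (Fin n) (Fin n) ℂ))
    (hω : Continuous ω)
    (u : EuclideanSpace ℝ (Fin m) → Matrix (Fin n) (Fin n) ℂ)
    (hu : ContDiff ℝ 1 u)
    (huunit : ∀ x, IsUnit (u x))
    (ωt : EuclideanSpace ℝ (Fin m) → EuclideanSpace ℝ (Fin m) → Matrix (Fin n) (Fin n) ℂ)
    (hωt : ∀ x w, ωt x w = (u x)⁻¹ * fderiv ℝ u x w + (u x)⁻¹ * ω x w * u x)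
    (γ γ' : ℝ → EuclideanSpace ℝ (Fin m))
    (hγ : ∀ t ∈ Set.Icc (0:ℝ) 1, HasDerivWithinAt γ (γ' t) (Set.Icc 0 1) t)
    (hγ' : ContinuousOn γ' (Set.Icc 0 1))
    (Pt : ℝ → Matrix (Fin n) (Fin n) ℂ)
    (hPt0 : Pt 0 = 1)
    (hPt : ∀ t ∈ Set.Icc (0:ℝ) 1,
      HasDerivWithinAt Pt (-(ω (γ t) (γ' t) * Pt t)) (Set.Icc 0 1) t)
    (Ptt : ℝ → Matrix (Fin n) (Fin n) ℂ)
    (hPtt0 : Ptt 0 = 1)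
    (hPtt : ∀ t ∈ Set.Icc (0:ℝ) 1,
      HasDerivWithinAt Ptt (-(ωt (γ t) (γ' t) * Ptt t)) (Set.Icc 0 1) t) :
    ∀ t ∈ Set.Icc (0:ℝ) 1, Ptt t = (u (γ t))⁻¹ * Pt t * u (γ 0) :=
  parallel_transport_gauge_transformation_general n m ω hω u hu huunit ωt hωt γ γ' hγ hγ' Pt hPt0
    hPt Ptt hPtt0 hPtt
end
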